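/- Let h > 0, T ≥ 0, and let F : ℝ≥0 → ℝ be continuous with F(0) ∈ [0,h]. If the one-sided upward reflection Γ⁰(F)(t) := F(t) − min(inf_{[0,t]} F, 0) satisfies Γ⁰(F)(t) ≤ h for all t ∈ [0,T], then the two-sided Skorohod reflection satisfies Λ_{0,h}(F)(t) = Γ⁰(F)(t) for all t ∈ [0,T]. -/

import Mathlib

open Set
open scoped NNReal ENNReal

/-- Solution data for the two-sided Skorohod reflection problem of `f` on `[0,h]`:
`c0` and `ch` are the compensators at `0` and at `h`,
and `fun t => f t + ch t + c0 t` is the reflected path `Λ_{0,h}(f)`.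
The support conditions on the measures `dc⁰` and `d(−cʰ)` are phrased as:
the compensator is constant on every (closed) interval on which the reflected
path avoids the corresponding boundary. -/
structure SkorohodPair (h : ℝ) (f c0 ch : ℝ≥0 → ℝ) : Prop where
  cont0 : Continuous c0
  conth : Continuous ch
  init0 : c0 0 = 0
  inith : ch 0 = 0
  mem_Icc : ∀ t, f t + ch t + c0 t ∈ Set.Icc (0 : ℝ) h
  mono0 : Monotone c0
  antih : Antitone ch
  flat0 : ∀ a b : ℝ≥0, a ≤ b → (∀ t ∈ Set.Icc a b, f t + ch t + c0 t ≠ 0) → c0 b = c0 a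
  flath : ∀ a b : ℝ≥0, a ≤ b → (∀ t ∈ Set.Icc a b, f t + ch t + c0 t ≠ h) → ch b = ch a

/-- The one-sided Skorohod reflection of `F` at level `0` (upward push):
`Γ⁰(F)(t) = F t − min (inf_{[0,t]} F) 0`. -/
noncomputable def gammaUp (F : ℝ≥0 → ℝ) (t : ℝ≥0) : ℝ :=
  F t - min (sInf (F '' Set.Icc 0 t)) 0

/-!
Write `Γ⁰(F) = F + m` with `m t = max (-inf_{[0,t]} F) 0` (`compensator F`) and
`Λ_{0,h}(F) = F + c⁰ + cʰ`, so that `Λ_{0,h}(F) = Γ⁰(F) + Δ` with `Δ = c⁰ + cʰ - m` continuous and `Δ 0 = 0`.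
While `Δ > 0` the path `Λ_{0,h}(F) > Γ⁰(F) ≥ 0` avoids `0`, so `c⁰` is flat and `Δ` cannot increase;
while `Δ < 0` we have `0 ≤ Λ_{0,h}(F) < Γ⁰(F) ≤ h`, so both `cʰ` and `m` are flat and `Δ` cannot
decrease. A continuous function that starts at `0` and never moves away from `0` stays at `0`.
-/

section NoEscape

variable {α β : Type*} [ConditionallyCompleteLinearOrder α] [TopologicalSpace α] [OrderTopology α]
  [DenselyOrdered α] [LinearOrder β] [TopologicalSpace β] [OrderClosedTopology β]

theorem ContinuousOn.le_of_antitone_above {g : α → β} {a b : α} {c : β}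
    (hg : ContinuousOn g (Icc a b)) (hab : a ≤ b) (ha : g a ≤ c)
    (hanti : ∀ x ∈ Icc a b, ∀ y ∈ Icc x b, (∀ u ∈ Icc x y, c < g u) → g y ≤ g x) :
    g b ≤ c := by
  have hbdd : BddAbove (Icc a b ∩ g ⁻¹' Iic c) := bddAbove_Icc.mono inter_subset_left
  have hs : sSup (Icc a b ∩ g ⁻¹' Iic c) ∈ Icc a b ∩ g ⁻¹' Iic c :=
    (hg.preimage_isClosed_of_isClosed isClosed_Icc isClosed_Iic).csSup_mem
      ⟨a, ⟨le_rfl, hab⟩, ha⟩ hbdd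
  set s := sSup (Icc a b ∩ g ⁻¹' Iic c)
  obtain ⟨⟨has, hsb⟩, hgs⟩ := hs
  rcases hsb.eq_or_lt with hsb | hsb
  · exact hsb ▸ hgs
  have habove : ∀ u ∈ Ioc s b, c < g u := fun u hu => lt_of_not_ge fun hgu =>
    hu.1.not_ge (le_csSup hbdd ⟨⟨has.trans hu.1.le, hu.2⟩, hgu⟩)
  have hright : Ioc s b ⊆ Icc s b ∩ g ⁻¹' Ici (g b) := fun x hx =>
    ⟨Ioc_subset_Icc_self hx, hanti x ⟨has.trans hx.1.le, hx.2⟩ b ⟨hx.2, le_rfl⟩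
      fun u hu => habove u ⟨hx.1.trans_le hu.1, hu.2⟩⟩
  have hclosed : IsClosed (Icc s b ∩ g ⁻¹' Ici (g b)) :=
    (hg.mono (Icc_subset_Icc_left has)).preimage_isClosed_of_isClosed isClosed_Icc isClosed_Ici
  have hgb : g b ≤ g s :=
    (hclosed.closure_subset_iff.2 hright (by rw [closure_Ioc hsb.ne]; exact left_mem_Icc.2 hsb.le)).2
  exact hgb.trans hgs

end NoEscape

namespace SkorohodOneSided

variable {F : ℝ≥0 → ℝ}

noncomputable def runningInf (F : ℝ≥0 → ℝ) (t : ℝ≥0) : ℝ := sInf (F '' Icc 0 t)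

noncomputable def compensator (F : ℝ≥0 → ℝ) (t : ℝ≥0) : ℝ := -min (runningInf F t) 0

theorem gammaUp_eq_add_compensator (F : ℝ≥0 → ℝ) (t : ℝ≥0) :
    gammaUp F t = F t + compensator F t :=
  sub_eq_add_neg _ _

theorem bddBelow_image_Icc (hF : Continuous F) (t : ℝ≥0) : BddBelow (F '' Icc 0 t) :=
  (isCompact_Icc.image hF).bddBelow

theorem runningInf_le (hF : Continuous F) {u t : ℝ≥0} (hu : u ≤ t) : runningInf F t ≤ F u :=
  csInf_le (bddBelow_image_Icc hF t) (mem_image_of_mem F ⟨zero_le, hu⟩)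

theorem runningInf_antitone (hF : Continuous F) : Antitone (runningInf F) := fun _ t hst =>
  csInf_le_csInf (bddBelow_image_Icc hF t) ((nonempty_Icc.2 zero_le).image F)
    (image_mono (Icc_subset_Icc_right hst))

theorem exists_runningInf_eq (hF : Continuous F) (t : ℝ≥0) :
    ∃ u ≤ t, F u = runningInf F t := by
  obtain ⟨u, hu, hmin⟩ := isCompact_Icc.exists_isMinOn (nonempty_Icc.2 zero_le) hF.continuousOn
  refine ⟨u, hu.2, le_antisymm ?_ (runningInf_le hF hu.2)⟩
  exact le_csInf ((nonempty_Icc.2 zero_le).image F) (forall_mem_image.2 fun v hv => hmin hv)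

theorem continuous_runningInf (hF : Continuous F) : Continuous (runningInf F) := by
  have hrescale : ∀ t : ℝ≥0, runningInf F t = sInf ((fun u => F (t * u)) '' Icc 0 1) := by
    intro t
    rw [← image_image F (t * ·), image_mul_left_Icc zero_le zero_le_one, mul_zero, mul_one]
    rfl
  simp_rw [funext hrescale]
  exact isCompact_Icc.continuous_sInf (f := fun t u => F (t * u)) (hF.comp continuous_mul)

theorem continuous_compensator (hF : Continuous F) : Continuous (compensator F) :=
  ((continuous_runningInf hF).min continuous_const).neg

theorem compensator_monotone (hF : Continuous F) : Monotone (compensator F) := fun _ _ hst =>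
  neg_le_neg (min_le_min_right 0 (runningInf_antitone hF hst))

theorem compensator_zero (hF0 : 0 ≤ F 0) : compensator F 0 = 0 := by
  simp [compensator, runningInf, hF0]

theorem gammaUp_nonneg (hF : Continuous F) (t : ℝ≥0) : 0 ≤ gammaUp F t :=
  sub_nonneg.2 ((min_le_left _ _).trans (runningInf_le hF le_rfl))

/-- The running infimum can only drop at a time where `F` attains it below `0`. -/
theorem exists_gammaUp_eq_zero_of_compensator_lt (hF : Continuous F) {a b : ℝ≥0}
    (hlt : compensator F a < compensator F b) : ∃ u ∈ Ioc a b, gammaUp F u = 0 := by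
  have hb : runningInf F b < min (runningInf F a) 0 :=
    (min_lt_iff.1 (neg_lt_neg_iff.1 hlt)).resolve_right (min_le_right _ _).not_gt
  obtain ⟨u, hub, hFu⟩ := exists_runningInf_eq hF b
  have hau : a < u := lt_of_not_ge fun hua =>
    (runningInf_le hF hua).not_gt (hFu ▸ hb.trans_le (min_le_left _ _))
  have hu : runningInf F u = F u :=
    le_antisymm (runningInf_le hF le_rfl) (hFu ▸ runningInf_antitone hF hub)
  refine ⟨u, ⟨hau, hub⟩, ?_⟩
  rw [gammaUp_eq_add_compensator, compensator, hu,
    min_eq_left (hFu ▸ hb.trans_le (min_le_right _ _)).le, add_neg_cancel]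

theorem compensator_eq_of_gammaUp_ne_zero (hF : Continuous F) {a b : ℝ≥0} (hab : a ≤ b)
    (hne : ∀ u ∈ Icc a b, gammaUp F u ≠ 0) : compensator F b = compensator F a := by
  refine (eq_of_le_of_not_lt (compensator_monotone hF hab) fun hlt => ?_).symm
  obtain ⟨u, hu, hzero⟩ := exists_gammaUp_eq_zero_of_compensator_lt hF hlt
  exact hne u (Ioc_subset_Icc_self hu) hzero

end SkorohodOneSided

open SkorohodOneSided in
theorem two_sided_eq_one_sided_up
    (h : ℝ) (T : ℝ≥0) (F : ℝ≥0 → ℝ) (hF : Continuous F)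
    (hF0 : F 0 ∈ Set.Icc (0 : ℝ) h)
    (c0 ch : ℝ≥0 → ℝ) (hp : SkorohodPair h F c0 ch)
    (hle : ∀ t ≤ T, gammaUp F t ≤ h) :
    ∀ t ≤ T, F t + ch t + c0 t = gammaUp F t := by
  intro t ht
  set Δ : ℝ≥0 → ℝ := fun u => c0 u + ch u - compensator F u
  have hΛ : ∀ u, F u + ch u + c0 u = gammaUp F u + Δ u := fun u => by
    rw [gammaUp_eq_add_compensator]; ring
  have hΔ : ContinuousOn Δ (Icc 0 t) :=
    ((hp.cont0.add hp.conth).sub (continuous_compensator hF)).continuousOn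
  have hΔ0 : Δ 0 = 0 := by simp [Δ, hp.init0, hp.inith, compensator_zero hF0.1]
  have hΔle : Δ t ≤ 0 := by
    refine hΔ.le_of_antitone_above zero_le hΔ0.le fun x _ y hy hpos => ?_
    have hc0 : c0 y = c0 x := hp.flat0 x y hy.1 fun u hu => by
      linarith [hΛ u, gammaUp_nonneg hF u, hpos u hu]
    linarith [hp.antih hy.1, compensator_monotone hF hy.1]
  have hΔge : 0 ≤ Δ t := by
    refine neg_nonpos.1 (hΔ.neg.le_of_antitone_above zero_le (by simp [hΔ0])
      fun x _ y hy hneg => ?_)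
    have hΔneg : ∀ u ∈ Icc x y, Δ u < 0 := fun u hu => neg_pos.1 (hneg u hu)
    have hch : ch y = ch x := hp.flath x y hy.1 fun u hu => by
      linarith [hΛ u, hle u (hu.2.trans (hy.2.trans ht)), hΔneg u hu]
    have hm : compensator F y = compensator F x :=
      compensator_eq_of_gammaUp_ne_zero hF hy.1 fun u hu => by
        linarith [hΛ u, (hp.mem_Icc u).1, hΔneg u hu]
    exact neg_le_neg (by linarith [hp.mono0 hy.1])
  rw [hΛ, le_antisymm hΔle hΔge, add_zero]
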